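/- arXiv:2304.04451 — 7 statements merged into one kernel-verified Lean document; each statement's English description precedes it below -/
import Mathlib

section
/- Let ζ(dx) = exp(−U(x))dx be a probability measure on ℝᵈ with U differentiable satisfying κ_U(r) ≥ α_U − g̃_U(r)/r for all r > 0, where α_U > 0 and g̃_U is bounded non-negative. Then for every σ ∈ (0, α_U/2), the integral ∫ exp(σ|x|²) dζ(x) is finite. -/
/-!
Testing the convexity bound at the pair `(x, 0)` and integrating it along the segment `[0, x]`
gives the quadratic lower bound `U x ≥ U 0 + ⟪∇U 0, x⟫ + (α/2)‖x‖² - G‖x‖`. Hence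
`exp (σ‖x‖² - U x)` is dominated by a Gaussian as soon as `σ < α/2`, and the density
`exp (-U)` turns integrability against `ζ` into integrability against Lebesgue measure.
-/

open Real Set Filter MeasureTheory
open scoped InnerProductSpace

section GradientLowerBound

variable {E : Type*} [NormedAddCommGroup E] [InnerProductSpace ℝ E] [CompleteSpace E]
  {U : E → ℝ}

theorem hasDerivAt_comp_smul_const {x : E} {t : ℝ} (hU : DifferentiableAt ℝ U (t • x)) :
    HasDerivAt (fun s : ℝ => U (s • x)) ⟪gradient U (t • x), x⟫_ℝ t := by
  have h : HasDerivAt (U ∘ fun s : ℝ => s • x) (fderiv ℝ U (t • x) ((1 : ℝ) • x)) t :=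
    hU.hasFDerivAt.comp_hasDerivAt t ((hasDerivAt_id t).smul_const x)
  rwa [one_smul, ← inner_gradient_left] at h

theorem quadratic_lower_bound_of_inner_gradient_sub_ge {α G : ℝ} (hU : Differentiable ℝ U)
    (hU' : ∀ x : E, α * ‖x‖ ^ 2 - G * ‖x‖ ≤ ⟪gradient U x - gradient U 0, x⟫_ℝ) (x : E) :
    U 0 + ⟪gradient U 0, x⟫_ℝ + α / 2 * ‖x‖ ^ 2 - G * ‖x‖ ≤ U x := by
  set a := ⟪gradient U 0, x⟫_ℝ - G * ‖x‖
  set b := α / 2 * ‖x‖ ^ 2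
  set φ : ℝ → ℝ := fun t => U (t • x) - (t * a + t ^ 2 * b)
  set φ' : ℝ → ℝ := fun t => ⟪gradient U (t • x), x⟫_ℝ - (a + 2 * t * b)
  have hφ : ∀ t, HasDerivAt φ (φ' t) t := fun t => by
    refine ((hasDerivAt_comp_smul_const (hU (t • x))).sub
      (((hasDerivAt_id t).mul_const a).add ((hasDerivAt_pow 2 t).mul_const b))).congr_deriv ?_
    simp only [φ']
    ring
  have hφ'_nonneg : ∀ t > 0, 0 ≤ φ' t := fun t ht => by
    have h := hU' (t • x)
    rw [norm_smul, norm_of_nonneg ht.le, inner_smul_right, inner_sub_left] at h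
    -- `t * φ' t = ⟪∇U (t • x) - ∇U 0, t • x⟫ - α‖t • x‖² + G‖t • x‖`
    have : 0 ≤ t * φ' t := by simp only [φ', a, b]; nlinarith
    exact nonneg_of_mul_nonneg_right (by linarith) ht
  have hmono : MonotoneOn φ (Ici 0) := by
    refine monotoneOn_of_hasDerivWithinAt_nonneg (convex_Ici 0)
      (fun t _ => (hφ t).continuousAt.continuousWithinAt)
      (fun t _ => (hφ t).hasDerivWithinAt) ?_
    rw [interior_Ici]
    exact hφ'_nonneg
  have h01 := hmono (mem_Ici.mpr le_rfl) (mem_Ici.mpr zero_le_one) zero_le_one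
  simp only [φ, a, zero_smul, one_smul] at h01
  linarith

end GradientLowerBound

section GaussianDomination

variable {V : Type*} [NormedAddCommGroup V] [InnerProductSpace ℝ V] [FiniteDimensional ℝ V]
  [MeasurableSpace V] [BorelSpace V]

theorem integrable_exp_neg_mul_sq_norm {b : ℝ} (hb : 0 < b) :
    Integrable (fun x : V => exp (-b * ‖x‖ ^ 2)) := by
  have h := (GaussianFourier.integrable_cexp_neg_mul_sq_norm_add
    (V := V) (b := b) (by simpa using hb) 0 0).norm
  convert h using 2 with x
  simp [Complex.norm_exp, ← Complex.ofReal_pow]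

theorem integrable_exp_of_le_sub_mul_sq_norm {f : V → ℝ} (hf : Continuous f) {A B b : ℝ}
    (hb : 0 < b) (hfle : ∀ x, f x ≤ A + B * ‖x‖ - b * ‖x‖ ^ 2) :
    Integrable (fun x => exp (f x)) := by
  refine ((integrable_exp_neg_mul_sq_norm (V := V) (half_pos hb)).const_mul
    (exp (A + B ^ 2 / (2 * b)))).mono' (by fun_prop) (Eventually.of_forall fun x => ?_)
  rw [norm_of_nonneg (exp_pos _).le, ← exp_add, exp_le_exp]
  have hAMGM : B * ‖x‖ ≤ b / 2 * ‖x‖ ^ 2 + B ^ 2 / (2 * b) := by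
    rw [← sub_nonneg]
    have : b / 2 * ‖x‖ ^ 2 + B ^ 2 / (2 * b) - B * ‖x‖ = (b * ‖x‖ - B) ^ 2 / (2 * b) := by
      field_simp
      ring
    rw [this]
    positivity
  linarith [hfle x]

end GaussianDomination

theorem exp_integrability_alc_general {d : ℕ}
    (U : EuclideanSpace ℝ (Fin d) → ℝ) (hU : Differentiable ℝ U)
    (ζ : Measure (EuclideanSpace ℝ (Fin d)))
    (hζ : ζ = volume.withDensity (fun x => ENNReal.ofReal (Real.exp (-U x))))
    (α : ℝ) (gt : ℝ → ℝ) (Gt : ℝ)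
    (hg_bdd : ∀ r : ℝ, 0 < r → gt r ≤ Gt)
    (hκ : ∀ x y : EuclideanSpace ℝ (Fin d), x ≠ y →
      α * ‖x - y‖ ^ 2 - gt ‖x - y‖ * ‖x - y‖ ≤
        (inner ℝ (gradient U x - gradient U y) (x - y) : ℝ)) :
    ∀ σ : ℝ, σ ∈ Ioo 0 (α / 2) →
      Integrable (fun x : EuclideanSpace ℝ (Fin d) => Real.exp (σ * ‖x‖ ^ 2)) ζ := by
  rintro σ ⟨-, hσ⟩
  have hκ₀ : ∀ x, α * ‖x‖ ^ 2 - Gt * ‖x‖ ≤ ⟪gradient U x - gradient U 0, x⟫_ℝ := fun x => by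
    rcases eq_or_ne x 0 with rfl | hx
    · simp
    have hpos := norm_pos_iff.mpr hx
    have h := hκ x 0 hx
    rw [sub_zero] at h
    nlinarith [hg_bdd _ hpos]
  have hlow := quadratic_lower_bound_of_inner_gradient_sub_ge hU hκ₀
  have hUc := hU.continuous
  subst hζ
  rw [integrable_withDensity_iff (f := fun x => ENNReal.ofReal (exp (-U x)))
    hUc.neg.rexp.measurable.ennreal_ofReal (Eventually.of_forall fun _ => ENNReal.ofReal_lt_top)]
  simp_rw [ENNReal.toReal_ofReal (exp_pos _).le, ← exp_add]
  refine integrable_exp_of_le_sub_mul_sq_norm (A := -U 0) (B := ‖gradient U 0‖ + Gt)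
    (by fun_prop) (sub_pos.mpr hσ) fun x => ?_
  have hCS := neg_le_of_abs_le (abs_real_inner_le_norm (gradient U 0) x)
  nlinarith [hlow x]

/-- Exponential integrability of asymptotically strongly log-concave measures:
if `ζ(dx) = exp(−U(x))dx` is a probability measure with
`⟪∇U(x)−∇U(y), x−y⟫ ≥ α_U|x−y|² − g̃_U(|x−y|)|x−y|` for `α_U > 0` and bounded
nonnegative `g̃_U`, then `∫ exp(σ|x|²) dζ < ∞` for every `σ ∈ (0, α_U/2)`. -/
theorem exp_integrability_alc {d : ℕ}
    (U : EuclideanSpace ℝ (Fin d) → ℝ) (hU : Differentiable ℝ U)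
    (ζ : Measure (EuclideanSpace ℝ (Fin d)))
    (hζ : ζ = volume.withDensity (fun x => ENNReal.ofReal (Real.exp (-U x))))
    (hprob : IsProbabilityMeasure ζ)
    (α : ℝ) (hα : 0 < α) (gt : ℝ → ℝ) (Gt : ℝ)
    (hg_nonneg : ∀ r : ℝ, 0 < r → 0 ≤ gt r)
    (hg_bdd : ∀ r : ℝ, 0 < r → gt r ≤ Gt)
    (hκ : ∀ x y : EuclideanSpace ℝ (Fin d), x ≠ y →
      α * ‖x - y‖ ^ 2 - gt ‖x - y‖ * ‖x - y‖ ≤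
        (inner ℝ (gradient U x - gradient U y) (x - y) : ℝ)) :
    ∀ σ : ℝ, σ ∈ Ioo 0 (α / 2) →
      Integrable (fun x : EuclideanSpace ℝ (Fin d) => Real.exp (σ * ‖x‖ ^ 2)) ζ :=
  exp_integrability_alc_general U hU ζ hζ α gt Gt hg_bdd hκ
end

section
/- Let ν be a probability measure on ℝᵈ such that ∫ exp(σ|x|²) dν(x) < ∞ for some σ > 0, and let p be a probability measure with finite relative entropy H(p|ν) < ∞. Then M₁(p) ≤ M₁(ν) + C₁ √(H(p|ν)) where C₁ = ((2/σ)(1 + log ∫ e^{σ|x|²} dν))^{1/2}, and M₂(p) ≤ M₂(ν) + C₂(√(H(p|ν)) + H(p|ν)/2) where C₂ = (3/σ) + (2/σ)∫ e^{σ|x|²} dν. -/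
/-!
With `φ = dp/dν` one has `H(p|ν) = ∫ klFun φ dν`, and Young's inequality
`u t ≤ klFun u + eᵗ - 1` integrates to the Donsker–Varadhan bound
`∫ F dp ≤ H + log ∫ e^F dν`.

First moment, `F = √σ |x|`: for `H ≤ 3`, the pointwise inequality
`3 (t - 1)² ≤ (2t + 4) klFun t` and AM–GM give
`∫ F d(p - ν) ≤ √(⅔ (∫ F² dp + 2 ∫ F² dν) H)`, and both second moments are bounded by
Donsker–Varadhan and Jensen; for `H > 3` Cauchy–Schwarz on each measure suffices.

Second moment, `F = σ |x|²`: Donsker–Varadhan for `l F` together with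
`e^{ls} - 1 - ls ≤ l² (e^s - 1 - s)` gives `∫ F d(p - ν) ≤ H / l + l (∫ e^F dν - 1)` for
`l ∈ (0, 1]`; take `l = √H` when `H < 1` and `l = 1` otherwise.
-/

open Real Set Filter MeasureTheory InformationTheory Topology

lemma mul_le_klFun_add_exp_sub_one {u : ℝ} (hu : 0 ≤ u) (t : ℝ) :
    u * t ≤ klFun u + exp t - 1 := by
  rcases hu.eq_or_lt with rfl | hu
  · simpa [klFun_zero] using (exp_pos t).le
  · have h := add_one_le_exp (t - log u)
    rw [exp_sub, exp_log hu, le_div_iff₀ hu] at h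
    rw [klFun_apply]
    nlinarith

lemma monotoneOn_of_hasDerivAt_nonneg {f f' : ℝ → ℝ} {D : Set ℝ} (hD : Convex ℝ D)
    (hf : ∀ x ∈ D, HasDerivAt f (f' x) x) (hf' : ∀ x ∈ interior D, 0 ≤ f' x) :
    MonotoneOn f D :=
  monotoneOn_of_hasDerivWithinAt_nonneg hD
    (fun x hx => (hf x hx).continuousAt.continuousWithinAt)
    (fun x hx => (hf x (interior_subset hx)).hasDerivWithinAt) hf'

lemma antitoneOn_of_hasDerivAt_nonpos {f f' : ℝ → ℝ} {D : Set ℝ} (hD : Convex ℝ D)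
    (hf : ∀ x ∈ D, HasDerivAt f (f' x) x) (hf' : ∀ x ∈ interior D, f' x ≤ 0) :
    AntitoneOn f D :=
  antitoneOn_of_hasDerivWithinAt_nonpos hD
    (fun x hx => (hf x hx).continuousAt.continuousWithinAt)
    (fun x hx => (hf x (interior_subset hx)).hasDerivWithinAt) hf'

lemma monotoneOn_add_one_mul_log_sub_two_mul :
    MonotoneOn (fun x => (x + 1) * log x - 2 * (x - 1)) (Ioi 0) := by
  refine monotoneOn_of_hasDerivAt_nonneg (f' := fun x => log x + x⁻¹ - 1) (convex_Ioi 0)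
    (fun x hx => ?_) (fun x hx => ?_)
  · have hx : x ≠ 0 := ne_of_gt hx
    refine ((((hasDerivAt_id x).add_const 1).mul (hasDerivAt_log hx)).sub
      (((hasDerivAt_id x).sub_const 1).const_mul 2)).congr_deriv ?_
    simp only [id]
    field_simp
    ring
  · rw [interior_Ioi] at hx
    have := log_le_sub_one_of_pos (inv_pos.2 hx)
    rw [log_inv] at this
    linarith

lemma three_mul_sub_one_sq_le_mul_klFun {t : ℝ} (ht : 0 ≤ t) :
    3 * (t - 1) ^ 2 ≤ (2 * t + 4) * klFun t := by
  rcases ht.eq_or_lt with rfl | ht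
  · norm_num [klFun_zero]
  set ψ : ℝ → ℝ := fun x => (2 * x + 4) * klFun x - 3 * (x - 1) ^ 2
  set χ : ℝ → ℝ := fun x => (x + 1) * log x - 2 * (x - 1)
  -- `ψ' = 4χ`, and `χ` increases on `(0, ∞)` and vanishes at `1`, so `ψ` is minimal at `1`.
  have hψ : ∀ x ∈ Ioi (0 : ℝ), HasDerivAt ψ (4 * χ x) x := fun x hx => by
    refine ((((hasDerivAt_id x).const_mul 2).add_const 4).mul (hasDerivAt_klFun (ne_of_gt hx))
      |>.sub ((((hasDerivAt_id x).sub_const 1).pow 2).const_mul 3)).congr_deriv ?_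
    simp only [χ, klFun_apply, id]
    ring
  have hχ1 : χ 1 = 0 := by simp [χ]
  have hχ := monotoneOn_add_one_mul_log_sub_two_mul
  suffices ψ 1 ≤ ψ t by simpa [ψ, klFun_one] using this
  rcases le_total t 1 with h1 | h1
  · refine antitoneOn_of_hasDerivAt_nonpos (convex_Icc t 1)
      (fun x hx => hψ x (ht.trans_le hx.1)) (fun x hx => ?_) ⟨le_rfl, h1⟩ ⟨h1, le_rfl⟩ h1
    rw [interior_Icc] at hx
    have := hχ (ht.trans hx.1) (mem_Ioi.2 one_pos) hx.2.le
    linarith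
  · refine monotoneOn_of_hasDerivAt_nonneg (convex_Ici 1)
      (fun x hx => hψ x (mem_Ioi.2 (one_pos.trans_le hx))) (fun x hx => ?_) self_mem_Ici h1 h1
    rw [interior_Ici] at hx
    have := hχ (mem_Ioi.2 one_pos) (mem_Ioi.2 (one_pos.trans hx)) hx.le
    linarith

lemma exp_mul_sub_one_sub_mul_le {l s : ℝ} (hs : 0 ≤ s) (hl₀ : 0 ≤ l) (hl₁ : l ≤ 1) :
    exp (l * s) - 1 - l * s ≤ l ^ 2 * (exp s - 1 - s) := by
  have hmono : MonotoneOn (fun x => l ^ 2 * (exp x - 1 - x) - (exp (l * x) - 1 - l * x))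
      (Ici 0) := by
    refine monotoneOn_of_hasDerivAt_nonneg
      (f' := fun x => l ^ 2 * (exp x - 1) - l * (exp (l * x) - 1)) (convex_Ici 0)
      (fun x _ => ?_) (fun x _ => ?_)
    · refine (((((hasDerivAt_exp x).sub_const 1).sub (hasDerivAt_id x)).const_mul (l ^ 2)).sub
        (((((hasDerivAt_id x).const_mul l).exp).sub_const 1).sub
          ((hasDerivAt_id x).const_mul l))).congr_deriv ?_
      simp only [id]
      ring
    · have h : exp (l * x) ≤ l * exp x + (1 - l) := by
        simpa using convexOn_exp.2 (mem_univ x) (mem_univ 0) hl₀ (sub_nonneg.2 hl₁) (by ring)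
      nlinarith [mul_le_mul_of_nonneg_left h hl₀]
  simpa using hmono self_mem_Ici hs hs

lemma le_div_two_add_div_of_sq_le_mul {w u v s : ℝ} (hu : 0 ≤ u) (hv : 0 ≤ v) (hs : 0 < s)
    (h : w ^ 2 ≤ u * v) : w ≤ s * u / 2 + v / (2 * s) := by
  rw [div_add_div _ _ two_ne_zero (by positivity), le_div_iff₀ (by positivity)]
  nlinarith [(abs_le_of_sq_le_sq' (a := 2 * s * w) (b := s ^ 2 * u + v)
    (by nlinarith [sq_nonneg (s ^ 2 * u - v), sq_nonneg s]) (by positivity)).2]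

lemma abs_mul_abs_sub_one_le {g t s : ℝ} (ht : 0 ≤ t) (hs : 0 < s) :
    |g| * |t - 1| ≤ s * (2 / 3 * (t * g ^ 2 + 2 * g ^ 2)) / 2 + klFun t / (2 * s) := by
  refine le_div_two_add_div_of_sq_le_mul (by positivity) (klFun_nonneg ht) hs ?_
  rw [mul_pow, sq_abs, sq_abs]
  nlinarith [mul_le_mul_of_nonneg_left (three_mul_sub_one_sq_le_mul_klFun ht) (sq_nonneg g)]

lemma le_sqrt_mul_of_forall_le {I U V : ℝ} (hU : 0 ≤ U) (hV : 0 ≤ V)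
    (h : ∀ s, 0 < s → I ≤ s * U / 2 + V / (2 * s)) : I ≤ √(U * V) := by
  have hab : ∀ a b, 0 < a → 0 < b → U ≤ a ^ 2 → V ≤ b ^ 2 → I ≤ a * b := fun a b ha hb hUa hVb =>
    calc I ≤ b / a * U / 2 + V / (2 * (b / a)) := h _ (div_pos hb ha)
      _ ≤ b / a * a ^ 2 / 2 + b ^ 2 / (2 * (b / a)) := by gcongr
      _ = a * b := by field_simp; ring
  have hε : ∀ ε > 0, I ≤ √(U + ε) * √(V + ε) := fun ε hε =>
    hab _ _ (sqrt_pos.2 (by linarith)) (sqrt_pos.2 (by linarith))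
      (by rw [sq_sqrt (by linarith)]; linarith) (by rw [sq_sqrt (by linarith)]; linarith)
  have hlim : Tendsto (fun ε => √(U + ε) * √(V + ε)) (𝓝[>] 0) (𝓝 √(U * V)) := by
    have : Continuous (fun ε => √(U + ε) * √(V + ε)) := by fun_prop
    simpa [← sqrt_mul hU] using (this.tendsto 0).mono_left nhdsWithin_le_nhds
  exact ge_of_tendsto hlim (eventually_nhdsWithin_of_forall hε)

lemma le_mul_sqrt_add_of_forall_le_div_add_mul {X H c : ℝ} (hH : 0 ≤ H) (hc : 0 ≤ c)
    (h : ∀ l, 0 < l → l ≤ 1 → X ≤ H / l + l * c) : X ≤ (1 + c) * √H + H := by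
  rcases lt_or_ge H 1 with hH1 | hH1
  · -- `l ↓ √H` balances the two terms.
    have hlim : Tendsto (fun l => l * (1 + c)) (𝓝[>] √H) (𝓝 (√H * (1 + c))) :=
      ((continuous_mul_const _).tendsto _).mono_left nhdsWithin_le_nhds
    have hX : X ≤ √H * (1 + c) := ge_of_tendsto hlim <| by
      filter_upwards [Ioc_mem_nhdsGT ((sqrt_lt' one_pos).2 (by simpa using hH1))] with l hl
      have hl₀ : 0 < l := (sqrt_nonneg H).trans_lt hl.1
      have : H / l ≤ l := by
        rw [div_le_iff₀ hl₀, ← sq_sqrt hH, sq]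
        exact mul_le_mul hl.1.le hl.1.le (sqrt_nonneg H) hl₀.le
      nlinarith [h l hl₀ hl.2]
    nlinarith
  · have := h 1 one_pos le_rfl
    have : c ≤ c * √H := le_mul_of_one_le_right hc (one_le_sqrt.2 hH1)
    nlinarith [sqrt_nonneg H]

section RelativeEntropy

variable {α : Type*} [MeasurableSpace α] {μ ν p : Measure α}

lemma integral_le_log_integral_exp [IsProbabilityMeasure μ] {F : α → ℝ} (hF : Integrable F μ)
    (hexp : Integrable (fun x => exp (F x)) μ) : ∫ x, F x ∂μ ≤ log (∫ x, exp (F x) ∂μ) := by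
  rw [le_log_iff_exp_le (integral_exp_pos hexp)]
  exact convexOn_exp.map_integral_le continuousOn_exp isClosed_univ
    (ae_of_all _ fun _ => mem_univ _) hF hexp

lemma abs_integral_le_sqrt_integral_sq [IsProbabilityMeasure μ] {F : α → ℝ} (hF : MemLp F 2 μ) :
    |∫ x, F x ∂μ| ≤ √(∫ x, F x ^ 2 ∂μ) := by
  refine abs_le_sqrt ?_
  have := ProbabilityTheory.variance_nonneg F μ
  rw [ProbabilityTheory.variance_eq_sub hF] at this
  simpa [sub_nonneg] using this

lemma integrable_of_integrable_sq [IsFiniteMeasure μ] {G : α → ℝ}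
    (hGm : AEStronglyMeasurable G μ) (hG : Integrable (fun x => G x ^ 2) μ) : Integrable G μ :=
  ((memLp_two_iff_integrable_sq hGm).2 hG).integrable one_le_two

lemma integrable_of_nonneg_of_integrable_exp {F : α → ℝ} (hFm : AEStronglyMeasurable F μ)
    (hF : 0 ≤ F) (hexp : Integrable (fun x => exp (F x)) μ) : Integrable F μ :=
  hexp.mono' hFm (ae_of_all _ fun x => by
    rw [norm_of_nonneg (hF x)]
    linarith [add_one_le_exp (F x)])

variable [IsProbabilityMeasure ν] [IsProbabilityMeasure p]

lemma integral_klFun_rnDeriv_eq_integral_llr (hac : p ≪ ν) (hllr : Integrable (llr p ν) p) :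
    ∫ x, klFun (p.rnDeriv ν x).toReal ∂ν = ∫ x, llr p ν x ∂p := by
  simp [integral_klFun_rnDeriv hac hllr]

lemma integral_llr_nonneg (hac : p ≪ ν) (hllr : Integrable (llr p ν) p) :
    0 ≤ ∫ x, llr p ν x ∂p := by
  simpa using integral_llr_add_sub_measure_univ_nonneg hac hllr

lemma integrable_of_nonneg_of_integrable_exp_of_integrable_llr (hac : p ≪ ν)
    (hllr : Integrable (llr p ν) p)
    {F : α → ℝ} (hFm : AEStronglyMeasurable F ν) (hF : 0 ≤ F)
    (hexp : Integrable (fun x => exp (F x)) ν) : Integrable F p := by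
  rw [← integrable_toReal_rnDeriv_mul_iff hac]
  refine (((integrable_klFun_rnDeriv_iff hac).2 hllr).add hexp).mono'
    ((Measure.measurable_rnDeriv p ν).ennreal_toReal.aestronglyMeasurable.mul hFm)
    (ae_of_all _ fun x => ?_)
  have := mul_le_klFun_add_exp_sub_one (ENNReal.toReal_nonneg (a := p.rnDeriv ν x)) (F x)
  rw [norm_of_nonneg (mul_nonneg ENNReal.toReal_nonneg (hF x))]
  simp only [Pi.add_apply]
  linarith

/-- The Donsker–Varadhan inequality. -/
lemma integral_le_integral_llr_add_log_integral_exp (hac : p ≪ ν)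
    (hllr : Integrable (llr p ν) p) {F : α → ℝ} (hF : Integrable F p)
    (hexp : Integrable (fun x => exp (F x)) ν) :
    ∫ x, F x ∂p ≤ ∫ x, llr p ν x ∂p + log (∫ x, exp (F x) ∂ν) := by
  set Z := ∫ x, exp (F x) ∂ν
  have hZ : 0 < Z := integral_exp_pos hexp
  set φ : α → ℝ := fun x => (p.rnDeriv ν x).toReal
  have hφ : Integrable φ ν := Measure.integrable_toReal_rnDeriv
  have hkl : Integrable (fun x => klFun (φ x)) ν := (integrable_klFun_rnDeriv_iff hac).2 hllr
  -- Young's inequality at `t = F x - log Z`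
  have hpt : ∀ x, φ x * F x ≤ klFun (φ x) + exp (F x) / Z - 1 + log Z * φ x := fun x => by
    have := mul_le_klFun_add_exp_sub_one (ENNReal.toReal_nonneg (a := p.rnDeriv ν x)) (F x - log Z)
    rw [exp_sub, exp_log hZ] at this
    linarith
  have hkl_exp : Integrable (fun x => klFun (φ x) + exp (F x) / Z) ν := hkl.add (hexp.div_const Z)
  have hsum : Integrable (fun x => klFun (φ x) + exp (F x) / Z - 1) ν :=
    hkl_exp.sub (integrable_const 1)
  have h : ∫ x, φ x * F x ∂ν ≤ ∫ x, (klFun (φ x) + exp (F x) / Z - 1 + log Z * φ x) ∂ν :=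
    integral_mono ((integrable_toReal_rnDeriv_mul_iff hac).2 hF) (hsum.add (hφ.const_mul _)) hpt
  rw [integral_toReal_rnDeriv_mul hac, integral_add hsum (hφ.const_mul _),
    integral_sub hkl_exp (integrable_const 1), integral_add hkl (hexp.div_const Z), integral_div,
    integral_const_mul, Measure.integral_toReal_rnDeriv hac,
    integral_klFun_rnDeriv_eq_integral_llr hac hllr, div_self hZ.ne'] at h
  simpa using h

lemma integral_sub_integral_le_sqrt_mul_integral_llr (hac : p ≪ ν)
    (hllr : Integrable (llr p ν) p) {G : α → ℝ} (hGm : AEStronglyMeasurable G ν)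
    (hGp : Integrable (fun x => G x ^ 2) p) (hGν : Integrable (fun x => G x ^ 2) ν) :
    ∫ x, G x ∂p - ∫ x, G x ∂ν ≤
      √(2 / 3 * (∫ x, G x ^ 2 ∂p + 2 * ∫ x, G x ^ 2 ∂ν) * ∫ x, llr p ν x ∂p) := by
  set φ : α → ℝ := fun x => (p.rnDeriv ν x).toReal
  set u : α → ℝ := fun x => 2 / 3 * (φ x * G x ^ 2 + 2 * G x ^ 2)
  have hφG : Integrable (fun x => φ x * G x) ν := (integrable_toReal_rnDeriv_mul_iff hac).2
    (integrable_of_integrable_sq (hGm.mono_ac hac) hGp)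
  have hG : Integrable G ν := integrable_of_integrable_sq hGm hGν
  have hφG2 : Integrable (fun x => φ x * G x ^ 2) ν := (integrable_toReal_rnDeriv_mul_iff hac).2 hGp
  have hu : Integrable u ν := (hφG2.add (hGν.const_mul 2)).const_mul (2 / 3)
  have hU : ∫ x, u x ∂ν = 2 / 3 * (∫ x, G x ^ 2 ∂p + 2 * ∫ x, G x ^ 2 ∂ν) := by
    rw [integral_const_mul, integral_add hφG2 (hGν.const_mul 2), integral_const_mul,
      integral_toReal_rnDeriv_mul hac]
  have hkl : Integrable (fun x => klFun (φ x)) ν := (integrable_klFun_rnDeriv_iff hac).2 hllr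
  have hdiff : ∫ x, G x ∂p - ∫ x, G x ∂ν = ∫ x, φ x * G x - G x ∂ν := by
    rw [integral_sub hφG hG, integral_toReal_rnDeriv_mul hac]
  refine hdiff ▸ le_sqrt_mul_of_forall_le ?_ (integral_llr_nonneg hac hllr) fun s hs => ?_
  · positivity
  calc ∫ x, φ x * G x - G x ∂ν
      ≤ ∫ x, (s * u x / 2 + klFun (φ x) / (2 * s)) ∂ν := by
        refine integral_mono (hφG.sub hG) (((hu.const_mul s).div_const 2).add (hkl.div_const _))
          fun x => ?_
        calc φ x * G x - G x ≤ |G x| * |φ x - 1| := by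
              rw [← abs_mul]; exact (le_abs_self _).trans_eq' (by ring)
          _ ≤ _ := abs_mul_abs_sub_one_le ENNReal.toReal_nonneg hs
    _ = _ := by
        rw [integral_add ((hu.const_mul s).div_const 2) (hkl.div_const _), integral_div,
          integral_div, integral_const_mul, hU, integral_klFun_rnDeriv_eq_integral_llr hac hllr]

/-- The weighted Csiszár–Kullback–Pinsker inequality. -/
lemma integral_sub_integral_le_of_integrable_exp_sq (hac : p ≪ ν)
    (hllr : Integrable (llr p ν) p) {F : α → ℝ} (hFm : AEStronglyMeasurable F ν)
    (hexp : Integrable (fun x => exp (F x ^ 2)) ν) :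
    ∫ x, F x ∂p - ∫ x, F x ∂ν ≤
      √(2 * (1 + log (∫ x, exp (F x ^ 2) ∂ν))) * √(∫ x, llr p ν x ∂p) := by
  set H := ∫ x, llr p ν x ∂p
  set L := log (∫ x, exp (F x ^ 2) ∂ν)
  have hF2ν : Integrable (fun x => F x ^ 2) ν :=
    integrable_of_nonneg_of_integrable_exp (hFm.pow 2) (fun x => sq_nonneg _) hexp
  have hF2p : Integrable (fun x => F x ^ 2) p :=
    integrable_of_nonneg_of_integrable_exp_of_integrable_llr hac hllr (hFm.pow 2)
      (fun x => sq_nonneg _) hexp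
  have hA : ∫ x, F x ^ 2 ∂p ≤ H + L :=
    integral_le_integral_llr_add_log_integral_exp hac hllr hF2p hexp
  have hB : ∫ x, F x ^ 2 ∂ν ≤ L := integral_le_log_integral_exp hF2ν hexp
  have hH : 0 ≤ H := integral_llr_nonneg hac hllr
  have hA₀ : 0 ≤ ∫ x, F x ^ 2 ∂p := integral_nonneg fun x => sq_nonneg _
  have hB₀ : 0 ≤ ∫ x, F x ^ 2 ∂ν := integral_nonneg fun x => sq_nonneg _
  rw [← sqrt_mul (by linarith)]
  rcases le_total H 3 with hH3 | hH3
  · refine (integral_sub_integral_le_sqrt_mul_integral_llr hac hllr hFm hF2p hF2ν).trans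
      (sqrt_le_sqrt ?_)
    nlinarith
  · have hp := abs_integral_le_sqrt_integral_sq
      ((memLp_two_iff_integrable_sq (hFm.mono_ac hac)).2 hF2p)
    have hν := abs_integral_le_sqrt_integral_sq ((memLp_two_iff_integrable_sq hFm).2 hF2ν)
    calc ∫ x, F x ∂p - ∫ x, F x ∂ν
        ≤ √(∫ x, F x ^ 2 ∂p) + √(∫ x, F x ^ 2 ∂ν) := by
          linarith [le_abs_self (∫ x, F x ∂p), neg_abs_le (∫ x, F x ∂ν)]
      _ ≤ √(2 * (∫ x, F x ^ 2 ∂p + ∫ x, F x ^ 2 ∂ν)) := by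
          rw [le_sqrt (by positivity) (by positivity)]
          nlinarith [sq_nonneg (√(∫ x, F x ^ 2 ∂p) - √(∫ x, F x ^ 2 ∂ν)), sq_sqrt hA₀, sq_sqrt hB₀]
      _ ≤ √(2 * (1 + L) * H) := sqrt_le_sqrt (by nlinarith)

lemma integral_sub_integral_le_of_integrable_exp (hac : p ≪ ν)
    (hllr : Integrable (llr p ν) p) {F : α → ℝ} (hFm : AEStronglyMeasurable F ν) (hF : 0 ≤ F)
    (hexp : Integrable (fun x => exp (F x)) ν) :
    ∫ x, F x ∂p - ∫ x, F x ∂ν ≤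
      (3 + 2 * ∫ x, exp (F x) ∂ν) * (√(∫ x, llr p ν x ∂p) + (∫ x, llr p ν x ∂p) / 2) := by
  set H := ∫ x, llr p ν x ∂p
  set Z := ∫ x, exp (F x) ∂ν
  have hFν : Integrable F ν := integrable_of_nonneg_of_integrable_exp hFm hF hexp
  have hFp : Integrable F p :=
    integrable_of_nonneg_of_integrable_exp_of_integrable_llr hac hllr hFm hF hexp
  have hH : 0 ≤ H := integral_llr_nonneg hac hllr
  have hZ : 1 ≤ Z := by
    simpa using integral_mono (integrable_const 1) hexp fun x => one_le_exp (hF x)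
  have hF₀ : 0 ≤ ∫ x, F x ∂ν := integral_nonneg hF
  have key : ∀ l, 0 < l → l ≤ 1 → ∫ x, F x ∂p - ∫ x, F x ∂ν ≤ H / l + l * (Z - 1) := by
    intro l hl₀ hl₁
    have hexpl : Integrable (fun x => exp (l * F x)) ν :=
      hexp.mono' (continuous_exp.comp_aestronglyMeasurable (hFm.const_mul l))
        (ae_of_all _ fun x => by
          rw [norm_of_nonneg (exp_pos _).le, exp_le_exp]
          exact mul_le_of_le_one_left (hF x) hl₁)
    have hDV := integral_le_integral_llr_add_log_integral_exp hac hllr (hFp.const_mul l) hexpl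
    have hlog := log_le_sub_one_of_pos (integral_exp_pos hexpl)
    have hrem : Integrable (fun x => exp (F x) - 1 - F x) ν :=
      (hexp.sub (integrable_const 1)).sub hFν
    have hlin : Integrable (fun x => 1 + l * F x) ν := (integrable_const 1).add (hFν.const_mul l)
    have hTaylor : ∫ x, exp (l * F x) ∂ν ≤ ∫ x, (1 + l * F x + l ^ 2 * (exp (F x) - 1 - F x)) ∂ν :=
      integral_mono hexpl (hlin.add (hrem.const_mul _))
        fun x => by linarith [exp_mul_sub_one_sub_mul_le (hF x) hl₀.le hl₁]
    have hexp1 : Integrable (fun x => exp (F x) - 1) ν := hexp.sub (integrable_const 1)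
    rw [integral_add hlin (hrem.const_mul _), integral_add (integrable_const 1) (hFν.const_mul l),
      integral_const_mul, integral_const_mul, integral_sub hexp1 hFν,
      integral_sub hexp (integrable_const 1)] at hTaylor
    rw [integral_const_mul] at hDV
    simp only [integral_const, probReal_univ, smul_eq_mul, one_mul] at hTaylor
    rw [div_add' _ _ _ hl₀.ne', le_div_iff₀ hl₀]
    nlinarith
  have := le_mul_sqrt_add_of_forall_le_div_add_mul hH (by linarith) key
  nlinarith [sqrt_nonneg H]

end RelativeEntropy

theorem moment_bounds_from_entropy_general {d : ℕ}
    (ν p : Measure (EuclideanSpace ℝ (Fin d)))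
    [IsProbabilityMeasure ν] [IsProbabilityMeasure p]
    (σ : ℝ) (hσ : 0 < σ)
    (hexp : Integrable (fun x => Real.exp (σ * ‖x‖ ^ 2)) ν)
    (hac : p ≪ ν)
    (hlog : Integrable (fun x => Real.log ((p.rnDeriv ν x).toReal)) p)
    (H : ℝ) (hH : H = ∫ x, Real.log ((p.rnDeriv ν x).toReal) ∂p) :
    (∫ x, ‖x‖ ∂p) ≤ (∫ x, ‖x‖ ∂ν)
        + Real.sqrt ((2 / σ) * (1 + Real.log (∫ x, Real.exp (σ * ‖x‖ ^ 2) ∂ν)))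
          * Real.sqrt H ∧
    (∫ x, ‖x‖ ^ 2 ∂p) ≤ (∫ x, ‖x‖ ^ 2 ∂ν)
        + (3 / σ + (2 / σ) * ∫ x, Real.exp (σ * ‖x‖ ^ 2) ∂ν)
          * (Real.sqrt H + H / 2) := by
  have hsq : ∀ x : EuclideanSpace ℝ (Fin d), (√σ * ‖x‖) ^ 2 = σ * ‖x‖ ^ 2 := fun x => by
    rw [mul_pow, sq_sqrt hσ.le]
  have h₁ := integral_sub_integral_le_of_integrable_exp_sq hac hlog
    (F := fun x => √σ * ‖x‖) (by fun_prop) (by simpa only [hsq] using hexp)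
  have h₂ := integral_sub_integral_le_of_integrable_exp hac hlog
    (F := fun x => σ * ‖x‖ ^ 2) (by fun_prop) (fun x => by positivity) hexp
  simp only [hsq, integral_const_mul, ← mul_sub, llr, ← hH] at h₁ h₂
  set Z := ∫ x, exp (σ * ‖x‖ ^ 2) ∂ν
  constructor
  · rw [← sub_le_iff_le_add', show 2 / σ * (1 + log Z) = 2 * (1 + log Z) / σ by ring,
      sqrt_div' _ hσ.le, div_mul_eq_mul_div, le_div_iff₀ (sqrt_pos.2 hσ)]
    linarith
  · rw [← sub_le_iff_le_add', show (3 / σ + 2 / σ * Z) * (√H + H / 2)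
      = (3 + 2 * Z) * (√H + H / 2) / σ by ring, le_div_iff₀ hσ]
    linarith

/-- Moment bounds in terms of relative entropy (weighted Csiszár–Kullback–Pinsker):
if `∫ e^{σ|x|²} dν < ∞` and `H(p|ν) < ∞`, then
`M₁(p) ≤ M₁(ν) + C₁ √H(p|ν)` and `M₂(p) ≤ M₂(ν) + C₂(√H(p|ν) + H(p|ν)/2)`. -/
theorem moment_bounds_from_entropy {d : ℕ}
    (ν p : Measure (EuclideanSpace ℝ (Fin d)))
    [IsProbabilityMeasure ν] [IsProbabilityMeasure p]
    (σ : ℝ) (hσ : 0 < σ)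
    (hexp : Integrable (fun x => Real.exp (σ * ‖x‖ ^ 2)) ν)
    (hac : p ≪ ν)
    (hlog : Integrable (fun x => Real.log ((p.rnDeriv ν x).toReal)) p)
    (H : ℝ) (hH : H = ∫ x, Real.log ((p.rnDeriv ν x).toReal) ∂p)
    (hM1p : Integrable (fun x => ‖x‖) p) (hM1ν : Integrable (fun x => ‖x‖) ν)
    (hM2p : Integrable (fun x => ‖x‖ ^ 2) p) (hM2ν : Integrable (fun x => ‖x‖ ^ 2) ν) :
    (∫ x, ‖x‖ ∂p) ≤ (∫ x, ‖x‖ ∂ν)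
        + Real.sqrt ((2 / σ) * (1 + Real.log (∫ x, Real.exp (σ * ‖x‖ ^ 2) ∂ν)))
          * Real.sqrt H ∧
    (∫ x, ‖x‖ ^ 2 ∂p) ≤ (∫ x, ‖x‖ ^ 2 ∂ν)
        + (3 / σ + (2 / σ) * ∫ x, Real.exp (σ * ‖x‖ ^ 2) ∂ν)
          * (Real.sqrt H + H / 2) :=
  moment_bounds_from_entropy_general ν p σ hσ hexp hac hlog H hH
end

section
/- Fix a₀ > 0, T > 0, β ∈ (0, ∞), and the function G(α, 2) as above (positive, non-decreasing, continuous, bounded by 2/β on (−1/T, ∞)). Then the fixed-point equation α = a₀ − 1/T + G(α, 2)/(2T²) admits at least one solution α̅ in the interval (a₀ − 1/T, a₀ − 1/T + 1/(βT²)], and a₀ − 1/T is not in the closure of the solution set. -/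
open Real Set Filter

/-! The map `f α = a₀ - 1/T + G α / (2T²)` satisfies `a₀ - 1/T < f α ≤ a₀ - 1/T + 1/(βT²)`,
so the intermediate value theorem gives a fixed point in that interval, off its left endpoint.
That endpoint is moved by `f` and `f` is continuous there, so a whole neighbourhood of it is
free of fixed points. -/

theorem notMem_closure_setOf_eq_of_continuousAt {X : Type*} [TopologicalSpace X] [T2Space X]
    {f : X → X} {c : X} (hf : ContinuousAt f c) (hc : c ≠ f c) :
    c ∉ closure {x | x = f x} := by
  rw [mem_closure_iff_frequently, not_frequently]
  exact (continuousAt_id.ne_iff_eventually_ne hf).1 hc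

theorem fixed_point_exists_general (a₀ T β : ℝ) (ha₀ : 0 < a₀) (hT : 0 < T) (hβ : 0 < β)
    (G : ℝ → ℝ)
    (hGpos : ∀ α : ℝ, -1 / T < α → 0 < G α)
    (hGcont : ContinuousOn G (Ioi (-1 / T)))
    (hGbdd : ∀ α : ℝ, -1 / T < α → G α ≤ 2 / β) :
    (∃ α : ℝ, α ∈ Ioc (a₀ - 1 / T) (a₀ - 1 / T + 1 / (β * T ^ 2)) ∧
      α = a₀ - 1 / T + G α / (2 * T ^ 2)) ∧
    (a₀ - 1 / T) ∉
      closure {α : ℝ | -1 / T < α ∧ α = a₀ - 1 / T + G α / (2 * T ^ 2)} := by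
  set c := a₀ - 1 / T
  set f : ℝ → ℝ := fun α => c + G α / (2 * T ^ 2)
  have hc : -1 / T < c := by rw [neg_div]; linarith
  have hf_cont : ContinuousOn f (Ioi (-1 / T)) := continuousOn_const.add (hGcont.div_const _)
  have hf_gt : ∀ α, -1 / T < α → c < f α := fun α hα =>
    lt_add_of_pos_right c (div_pos (hGpos α hα) (by positivity))
  have hf_le : ∀ α, -1 / T < α → f α ≤ c + 1 / (β * T ^ 2) := fun α hα => by
    have : G α / (2 * T ^ 2) ≤ 1 / (β * T ^ 2) := calc
      G α / (2 * T ^ 2) ≤ 2 / β / (2 * T ^ 2) := by gcongr; exact hGbdd α hα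
      _ = 1 / (β * T ^ 2) := by field_simp
    exact (add_le_add_iff_left c).2 this
  have hc_le : c ≤ c + 1 / (β * T ^ 2) := le_add_of_nonneg_right (by positivity)
  have hIcc : Icc c (c + 1 / (β * T ^ 2)) ⊆ Ioi (-1 / T) := fun x hx => hc.trans_le hx.1
  obtain ⟨α, hα, hα_fix⟩ := exists_mem_Icc_isFixedPt (hf_cont.mono hIcc) hc_le
    (hf_gt c hc).le (hf_le _ (hIcc (right_mem_Icc.2 hc_le)))
  refine ⟨⟨α, ⟨hα_fix ▸ hf_gt α (hIcc hα), hα.2⟩, hα_fix.symm⟩, fun h => ?_⟩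
  exact notMem_closure_setOf_eq_of_continuousAt (hf_cont.continuousAt (Ioi_mem_nhds hc))
    (hf_gt c hc).ne (closure_mono (fun x hx => hx.2) h)

/-- Existence of a fixed point for `α = a₀ − 1/T + G(α)/(2T²)` in
`(a₀ − 1/T, a₀ − 1/T + 1/(βT²)]`, where `G` is positive, non-decreasing,
continuous and bounded by `2/β` on `(−1/T, ∞)`; moreover `a₀ − 1/T` is not in
the closure of the set of solutions. -/
theorem fixed_point_exists (a₀ T β : ℝ) (ha₀ : 0 < a₀) (hT : 0 < T) (hβ : 0 < β)
    (G : ℝ → ℝ)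
    (hGpos : ∀ α : ℝ, -1 / T < α → 0 < G α)
    (hGmono : MonotoneOn G (Ioi (-1 / T)))
    (hGcont : ContinuousOn G (Ioi (-1 / T)))
    (hGbdd : ∀ α : ℝ, -1 / T < α → G α ≤ 2 / β) :
    (∃ α : ℝ, α ∈ Ioc (a₀ - 1 / T) (a₀ - 1 / T + 1 / (β * T ^ 2)) ∧
      α = a₀ - 1 / T + G α / (2 * T ^ 2)) ∧
    (a₀ - 1 / T) ∉
      closure {α : ℝ | -1 / T < α ∧ α = a₀ - 1 / T + G α / (2 * T ^ 2)} :=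
  fixed_point_exists_general a₀ T β ha₀ hT hβ G hGpos hGcont hGbdd
end

section
/- Let g̃ ∈ 𝒢̃ with g̃'(0) > 0, let α > 0, set R := ‖g̃‖_∞ (1/g̃'(0) + 2/α), and define f(r) = g̃(r) for r ≤ R and f(r) = g̃(R) + g̃'(R)(r − R) for r > R. Then f is C¹ on (0,∞), non-decreasing, concave, satisfies f(0⁺) = 0, and obeys the two-sided linear bounds g̃'(R) r ≤ f(r) ≤ g̃'(0) r and g̃'(R) ≤ f'(r) ≤ g̃'(0) for all r > 0. -/
/-!
Since `g, g' ≥ 0`, the inequality `2g'' + g g' ≤ 0` forces `g'' ≤ 0`, so `g'` is non-increasing and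
bounded by its limit `g'(0)`. The supremum of `g` is positive (otherwise `g ≡ 0` and `g' ≡ 0`,
contradicting `g'(0) > 0`), hence `R > 0` and `f = g` near `0`. The extension `f` is differentiable
with `f'(r) = g'(min r R)`, which is continuous, non-negative and non-increasing, and lies between
`g'(R)` and `g'(0)`; the linear bounds on `f` follow from the mean value theorem on `[t, r]`,
letting `t ↓ 0`.
-/

open Set Filter Topology

lemma antitoneOn_deriv_of_deriv2_nonpos {g : ℝ → ℝ} {s : Set ℝ} (hs : IsOpen s)
    (hconv : Convex ℝ s) (hg : ContDiffOn ℝ 2 g s) (hg'' : ∀ x ∈ s, deriv (deriv g) x ≤ 0) :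
    AntitoneOn (deriv g) s := by
  refine antitoneOn_of_deriv_nonpos hconv (hg.continuousOn_deriv_of_isOpen hs (by norm_num)) ?_
    (by rwa [hs.interior_eq])
  rw [hs.interior_eq]
  exact (hg.deriv_of_isOpen (m := 1) hs (by norm_num)).differentiableOn (by norm_num)

lemma AntitoneOn.le_of_tendsto_nhdsGT {u : ℝ → ℝ} {a L : ℝ} (hu : AntitoneOn u (Ioi a))
    (hL : Tendsto u (𝓝[>] a) (𝓝 L)) {r : ℝ} (hr : a < r) : u r ≤ L := by
  refine ge_of_tendsto hL ?_
  filter_upwards [Ioo_mem_nhdsGT hr] with s hs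
  exact hu hs.1 hr hs.2.le

lemma pos_of_isLUB_of_tendsto_deriv {g : ℝ → ℝ} {M L : ℝ} (hg : ∀ r, 0 < r → 0 ≤ g r)
    (hM : IsLUB (g '' Ioi 0) M) (hL : Tendsto (deriv g) (𝓝[>] 0) (𝓝 L)) (hL0 : L ≠ 0) :
    0 < M := by
  by_contra! hM0
  have hg_zero : ∀ r ∈ Ioi (0 : ℝ), g r = 0 := fun r hr =>
    le_antisymm ((hM.1 ⟨r, hr, rfl⟩).trans hM0) (hg r hr)
  have hderiv_zero : ∀ r ∈ Ioi (0 : ℝ), deriv g r = 0 := fun r hr => by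
    rw [(eventuallyEq_of_mem (isOpen_Ioi.mem_nhds hr) hg_zero).deriv_eq, deriv_const]
  exact hL0 (tendsto_nhds_unique hL (tendsto_const_nhds.congr'
    (eventuallyEq_of_mem self_mem_nhdsWithin fun r hr => (hderiv_zero r hr).symm)))

lemma le_mul_of_deriv_le_of_tendsto_nhdsGT_zero {f : ℝ → ℝ} {C : ℝ}
    (hf : DifferentiableOn ℝ f (Ioi 0)) (hf0 : Tendsto f (𝓝[>] 0) (𝓝 0))
    (hC : ∀ x, 0 < x → deriv f x ≤ C) {r : ℝ} (hr : 0 < r) : f r ≤ C * r := by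
  have hmvt := (convex_Ioi (0 : ℝ)).image_sub_le_mul_sub_of_deriv_le hf.continuousOn
    (by rwa [interior_Ioi]) (by rw [interior_Ioi]; exact hC)
  have hlim : Tendsto (fun t => f t + C * (r - t)) (𝓝[>] 0) (𝓝 (0 + C * (r - 0))) :=
    hf0.add (((continuous_const.mul (continuous_const.sub continuous_id)).tendsto 0).mono_left
      nhdsWithin_le_nhds)
  rw [zero_add, sub_zero] at hlim
  refine ge_of_tendsto hlim ?_
  filter_upwards [Ioo_mem_nhdsGT hr] with t ht
  linarith [hmvt t ht.1 r hr ht.2.le]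

lemma mul_le_of_le_deriv_of_tendsto_nhdsGT_zero {f : ℝ → ℝ} {c : ℝ}
    (hf : DifferentiableOn ℝ f (Ioi 0)) (hf0 : Tendsto f (𝓝[>] 0) (𝓝 0))
    (hc : ∀ x, 0 < x → c ≤ deriv f x) {r : ℝ} (hr : 0 < r) : c * r ≤ f r := by
  have := le_mul_of_deriv_le_of_tendsto_nhdsGT_zero (f := fun x => -f x) (C := -c) hf.neg
    (by simpa using hf0.neg) (fun x hx => by simpa [deriv.neg] using hc x hx) hr
  simp only [neg_mul] at this
  linarith

noncomputable def linearExtension (g : ℝ → ℝ) (R r : ℝ) : ℝ :=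
  if r ≤ R then g r else g R + deriv g R * (r - R)

section linearExtension

variable {g : ℝ → ℝ} {R r : ℝ}

lemma linearExtension_of_le (h : r ≤ R) : linearExtension g R r = g r := if_pos h

lemma linearExtension_of_ge (h : R ≤ r) : linearExtension g R r = g R + deriv g R * (r - R) := by
  rcases h.eq_or_lt with rfl | h
  · simp [linearExtension]
  · exact if_neg (not_le.mpr h)

lemma hasDerivAt_linearExtension (hg : DifferentiableAt ℝ g (min r R)) :
    HasDerivAt (linearExtension g R) (deriv g (min r R)) r := by
  have hline : ∀ x, HasDerivAt (fun y => g R + deriv g R * (y - R)) (deriv g R) x := fun x => by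
    simpa using (((hasDerivAt_id x).sub_const R).const_mul (deriv g R)).const_add (g R)
  rcases lt_trichotomy r R with h | rfl | h
  · rw [min_eq_left h.le] at hg ⊢
    exact hg.hasDerivAt.congr_of_eventuallyEq
      (eventually_of_mem (Iio_mem_nhds h) fun x hx => linearExtension_of_le (le_of_lt hx))
  · rw [min_self] at hg ⊢
    have hleft : HasDerivWithinAt (linearExtension g r) (deriv g r) (Iic r) r :=
      hg.hasDerivAt.hasDerivWithinAt.congr (fun _ hx => linearExtension_of_le hx)
        (linearExtension_of_le le_rfl)
    have hright : HasDerivWithinAt (linearExtension g r) (deriv g r) (Ici r) r :=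
      (hline r).hasDerivWithinAt.congr (fun _ hx => linearExtension_of_ge hx)
        (linearExtension_of_ge le_rfl)
    simpa using hleft.union hright
  · rw [min_eq_right h.le]
    exact (hline r).congr_of_eventuallyEq
      (eventually_of_mem (Ioi_mem_nhds h) fun x hx => linearExtension_of_ge (le_of_lt hx))

lemma tendsto_linearExtension_nhdsGT_zero (hR : 0 < R) (hg0 : Tendsto g (𝓝[>] 0) (𝓝 0)) :
    Tendsto (linearExtension g R) (𝓝[>] 0) (𝓝 0) :=
  hg0.congr' <| eventually_of_mem (Ioo_mem_nhdsGT hR) fun _ hx =>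
    (linearExtension_of_le hx.2.le).symm

variable (hR : 0 < R) (hg : DifferentiableOn ℝ g (Ioi 0))
include hR hg

lemma deriv_linearExtension (hr : 0 < r) : deriv (linearExtension g R) r = deriv g (min r R) :=
  (hasDerivAt_linearExtension (hg.differentiableAt (isOpen_Ioi.mem_nhds (lt_min hr hR)))).deriv

lemma differentiableOn_linearExtension : DifferentiableOn ℝ (linearExtension g R) (Ioi 0) :=
  fun _ hr => (hasDerivAt_linearExtension (hg.differentiableAt
    (isOpen_Ioi.mem_nhds (lt_min hr hR)))).differentiableAt.differentiableWithinAt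

lemma contDiffOn_one_linearExtension (hdg : ContinuousOn (deriv g) (Ioi 0)) :
    ContDiffOn ℝ 1 (linearExtension g R) (Ioi 0) := by
  rw [show (1 : WithTop ℕ∞) = 0 + 1 from rfl, contDiffOn_succ_iff_deriv_of_isOpen isOpen_Ioi]
  refine ⟨differentiableOn_linearExtension hR hg, by simp, contDiffOn_zero.mpr ?_⟩
  exact (hdg.comp (continuous_id.min continuous_const).continuousOn fun r hr => lt_min hr hR)
    |>.congr fun r hr => deriv_linearExtension hR hg hr

lemma monotoneOn_linearExtension (hg' : ∀ r, 0 < r → 0 ≤ deriv g r) :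
    MonotoneOn (linearExtension g R) (Ioi 0) := by
  refine monotoneOn_of_deriv_nonneg (convex_Ioi 0)
    (differentiableOn_linearExtension hR hg).continuousOn
    (by rw [interior_Ioi]; exact differentiableOn_linearExtension hR hg) ?_
  rw [interior_Ioi]
  intro r hr
  rw [deriv_linearExtension hR hg hr]
  exact hg' _ (lt_min hr hR)

lemma concaveOn_linearExtension (hanti : AntitoneOn (deriv g) (Ioi 0)) :
    ConcaveOn ℝ (Ioi 0) (linearExtension g R) := by
  refine AntitoneOn.concaveOn_of_deriv (convex_Ioi 0)
    (differentiableOn_linearExtension hR hg).continuousOn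
    (by rw [interior_Ioi]; exact differentiableOn_linearExtension hR hg) ?_
  rw [interior_Ioi]
  intro x hx y hy hxy
  rw [deriv_linearExtension hR hg hx, deriv_linearExtension hR hg hy]
  exact hanti (lt_min hx hR) (lt_min hy hR) (min_le_min_right R hxy)

end linearExtension

/-- Linear extension of `g̃ ∈ 𝒢̃` beyond `R = ‖g̃‖_∞(1/g̃'(0) + 2/α)`:
the function `f(r) = g̃(r)` for `r ≤ R`, `f(r) = g̃(R) + g̃'(R)(r−R)` for `r > R`,
is `C¹` on `(0,∞)`, non-decreasing, concave, vanishes at `0⁺`, and satisfies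
`g̃'(R)·r ≤ f(r) ≤ g̃'(0)·r` and `g̃'(R) ≤ f'(r) ≤ g̃'(0)` for all `r > 0`. -/
theorem linear_extension_properties
    (g : ℝ → ℝ) (M L0 α : ℝ) (hα : 0 < α)
    (hgC2 : ContDiffOn ℝ 2 g (Ioi 0))
    (hg_nonneg : ∀ r : ℝ, 0 < r → 0 ≤ g r)
    (hg0 : Tendsto g (nhdsWithin 0 (Ioi 0)) (nhds 0))
    (hg' : ∀ r : ℝ, 0 < r → 0 ≤ deriv g r)
    (hg'' : ∀ r : ℝ, 0 < r → 2 * deriv (deriv g) r + g r * deriv g r ≤ 0)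
    (hM : IsLUB (g '' Ioi 0) M)
    (hL0 : Tendsto (deriv g) (nhdsWithin 0 (Ioi 0)) (nhds L0)) (hL0pos : 0 < L0)
    (R : ℝ) (hR : R = M * (1 / L0 + 2 / α))
    (f : ℝ → ℝ)
    (hf : ∀ r : ℝ, f r = if r ≤ R then g r else g R + deriv g R * (r - R)) :
    ContDiffOn ℝ 1 f (Ioi 0) ∧
    MonotoneOn f (Ioi 0) ∧
    ConcaveOn ℝ (Ioi 0) f ∧
    Tendsto f (nhdsWithin 0 (Ioi 0)) (nhds 0) ∧
    (∀ r : ℝ, 0 < r →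
      deriv g R * r ≤ f r ∧ f r ≤ L0 * r ∧
      deriv g R ≤ deriv f r ∧ deriv f r ≤ L0) := by
  obtain rfl : f = linearExtension g R := funext hf
  have hgdiff : DifferentiableOn ℝ g (Ioi 0) := hgC2.differentiableOn (by norm_num)
  have hanti : AntitoneOn (deriv g) (Ioi 0) :=
    antitoneOn_deriv_of_deriv2_nonpos isOpen_Ioi (convex_Ioi 0) hgC2 fun x hx => by
      nlinarith [hg'' x hx, mul_nonneg (hg_nonneg x hx) (hg' x hx)]
  have hMpos : 0 < M := pos_of_isLUB_of_tendsto_deriv hg_nonneg hM hL0 hL0pos.ne'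
  have hRpos : 0 < R := hR ▸ by positivity
  have hf0 := tendsto_linearExtension_nhdsGT_zero hRpos hg0
  have hfdiff := differentiableOn_linearExtension hRpos hgdiff
  have hderiv_ge : ∀ r, 0 < r → deriv g R ≤ deriv (linearExtension g R) r := fun r hr => by
    rw [deriv_linearExtension hRpos hgdiff hr]
    exact hanti (lt_min hr hRpos) hRpos (min_le_right r R)
  have hderiv_le : ∀ r, 0 < r → deriv (linearExtension g R) r ≤ L0 := fun r hr => by
    rw [deriv_linearExtension hRpos hgdiff hr]
    exact hanti.le_of_tendsto_nhdsGT hL0 (lt_min hr hRpos)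
  refine ⟨contDiffOn_one_linearExtension hRpos hgdiff
      (hgC2.continuousOn_deriv_of_isOpen isOpen_Ioi (by norm_num)),
    monotoneOn_linearExtension hRpos hgdiff hg', concaveOn_linearExtension hRpos hgdiff hanti,
    hf0, fun r hr => ⟨mul_le_of_le_deriv_of_tendsto_nhdsGT_zero hfdiff hf0 hderiv_ge hr,
      le_mul_of_deriv_le_of_tendsto_nhdsGT_zero hfdiff hf0 hderiv_le hr,
      hderiv_ge r hr, hderiv_le r hr⟩⟩
end

section
/- With f as in the previous construction (linear extension of g̃ ∈ 𝒢̃ beyond R = ‖g̃‖_∞(1/g̃'(0) + 2/α)), suppose additionally κ_U(r) ≥ α − g̃(r)/r for all r > 0. Then for every r ∈ (0, R) ∪ (R, ∞): 2f''(r) − (r/2) f'(r) κ_U(r) ≤ −λ f(r), where λ := (g̃'(R)/2)(α/g̃'(0) + 1). -/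
open Real Set Filter Topology

/-!
On `(0, R)` the function `f` is `g`, and `2 g'' ≤ -g g'` together with `r κ ≥ α r - g` reduces the
claim to `g'(R) (1 + α / L0) g(r) ≤ g'(r) (g(r) + α r)`. This holds because `g'` is antitone, so
`g'(R) ≤ g'(r) ≤ L0` and hence `g(r) ≤ L0 r`. On `(R, ∞)` the function `f` is affine with slope
`g'(R)`, and the claim reduces to `(1 + α / L0) f(r) ≤ α r - M`. This is where the choice of `R`
enters: `g'(R) R ≤ g(R) ≤ M` forces `g'(R) (1 + α / L0) ≤ α`.
-/

lemma AntitoneOn.le_of_tendsto_nhdsGT_s12 {α β : Type*} [LinearOrder α] [TopologicalSpace α]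
    [OrderTopology α] [DenselyOrdered α] [NoMaxOrder α] [Preorder β] [TopologicalSpace β]
    [OrderClosedTopology β] {φ : α → β} {a x : α} {L : β} (hφ : AntitoneOn φ (Ioi a))
    (hL : Tendsto φ (𝓝[>] a) (𝓝 L)) (hx : a < x) : φ x ≤ L :=
  ge_of_tendsto hL <| by
    filter_upwards [Ioo_mem_nhdsGT hx] with s hs
    exact hφ hs.1 hx hs.2.le

lemma le_mul_of_deriv_le_of_tendsto_nhdsGT_zero_s12 {g : ℝ → ℝ} {c x : ℝ} (hx : 0 < x)
    (hg0 : Tendsto g (𝓝[>] 0) (𝓝 0)) (hg : ContinuousOn g (Ioc 0 x))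
    (hg' : DifferentiableOn ℝ g (Ioo 0 x)) (hle : ∀ s ∈ Ioo 0 x, deriv g s ≤ c) :
    g x ≤ c * x := by
  have hmvt : ∀ᶠ s in 𝓝[>] 0, g x - g s ≤ c * (x - s) := by
    filter_upwards [Ioo_mem_nhdsGT hx] with s hs
    exact (convex_Ioc 0 x).image_sub_le_mul_sub_of_deriv_le hg (by rwa [interior_Ioc])
      (by rwa [interior_Ioc]) s ⟨hs.1, hs.2.le⟩ x ⟨hx, le_rfl⟩ hs.2.le
  have hlhs : Tendsto (fun s => g x - g s) (𝓝[>] 0) (𝓝 (g x - 0)) := tendsto_const_nhds.sub hg0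
  have hrhs : Tendsto (fun s => c * (x - s)) (𝓝[>] 0) (𝓝 (c * (x - 0))) :=
    tendsto_nhdsWithin_of_tendsto_nhds ((by fun_prop : Continuous fun s => c * (x - s)).tendsto 0)
  simpa using le_of_tendsto_of_tendsto hlhs hrhs hmvt

lemma mul_le_of_le_deriv_of_tendsto_nhdsGT_zero_s12 {g : ℝ → ℝ} {c x : ℝ} (hx : 0 < x)
    (hg0 : Tendsto g (𝓝[>] 0) (𝓝 0)) (hg : ContinuousOn g (Ioc 0 x))
    (hg' : DifferentiableOn ℝ g (Ioo 0 x)) (hle : ∀ s ∈ Ioo 0 x, c ≤ deriv g s) :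
    c * x ≤ g x := by
  have hmvt : ∀ᶠ s in 𝓝[>] 0, c * (x - s) ≤ g x - g s := by
    filter_upwards [Ioo_mem_nhdsGT hx] with s hs
    exact (convex_Ioc 0 x).mul_sub_le_image_sub_of_le_deriv hg (by rwa [interior_Ioc])
      (by rwa [interior_Ioc]) s ⟨hs.1, hs.2.le⟩ x ⟨hx, le_rfl⟩ hs.2.le
  have hlhs : Tendsto (fun s => c * (x - s)) (𝓝[>] 0) (𝓝 (c * (x - 0))) :=
    tendsto_nhdsWithin_of_tendsto_nhds ((by fun_prop : Continuous fun s => c * (x - s)).tendsto 0)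
  have hrhs : Tendsto (fun s => g x - g s) (𝓝[>] 0) (𝓝 (g x - 0)) := tendsto_const_nhds.sub hg0
  simpa using le_of_tendsto_of_tendsto hlhs hrhs hmvt

lemma antitoneOn_deriv_of_two_deriv_deriv_add_mul_nonpos {g : ℝ → ℝ}
    (hg : ContDiffOn ℝ 2 g (Ioi 0)) (hg_nonneg : ∀ r : ℝ, 0 < r → 0 ≤ g r)
    (hg' : ∀ r : ℝ, 0 < r → 0 ≤ deriv g r)
    (hg'' : ∀ r : ℝ, 0 < r → 2 * deriv (deriv g) r + g r * deriv g r ≤ 0) :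
    AntitoneOn (deriv g) (Ioi 0) := by
  have hg'd : DifferentiableOn ℝ (deriv g) (Ioi 0) :=
    (hg.deriv_of_isOpen (m := 1) isOpen_Ioi (by norm_num)).differentiableOn one_ne_zero
  refine antitoneOn_of_deriv_nonpos (convex_Ioi 0) hg'd.continuousOn (by rwa [interior_Ioi])
    fun s hs => ?_
  rw [interior_Ioi] at hs
  nlinarith [hg'' s hs, mul_nonneg (hg_nonneg s hs) (hg' s hs)]

lemma exists_pos_of_tendsto_deriv_pos {g : ℝ → ℝ} {L : ℝ} (hg : DifferentiableOn ℝ g (Ioi 0))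
    (hanti : AntitoneOn (deriv g) (Ioi 0)) (hg0 : Tendsto g (𝓝[>] 0) (𝓝 0))
    (hL : Tendsto (deriv g) (𝓝[>] 0) (𝓝 L)) (hL0 : 0 < L) : ∃ x > 0, 0 < g x := by
  obtain ⟨x, hx, hx0⟩ := ((hL.eventually (lt_mem_nhds hL0)).and self_mem_nhdsWithin).exists
  refine ⟨x, hx0, (mul_pos hx hx0).trans_le ?_⟩
  exact mul_le_of_le_deriv_of_tendsto_nhdsGT_zero_s12 hx0 hg0 (hg.continuousOn.mono Ioc_subset_Ioi_self)
    (hg.mono Ioo_subset_Ioi_self) fun s hs => hanti hs.1 hx0 hs.2.le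

lemma mul_sub_le_mul_of_sub_div_le {a b k r : ℝ} (hr : 0 < r) (h : a - b / r ≤ k) :
    a * r - b ≤ r * k := by
  have := mul_le_mul_of_nonneg_left h hr.le
  rwa [mul_sub, mul_div_cancel₀ _ hr.ne', mul_comm] at this

lemma linear_extension_diff_ineq_of_lt {f g κ : ℝ → ℝ} {α L0 b r : ℝ} (hα : 0 ≤ α)
    (hL0 : 0 < L0) (hr : 0 < r) (hfg : f =ᶠ[𝓝 r] g)
    (hg'' : 2 * deriv (deriv g) r + g r * deriv g r ≤ 0) (hg : 0 ≤ g r) (hgL0 : g r ≤ L0 * r)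
    (hb : 0 ≤ b) (hbg' : b ≤ deriv g r) (hκ : α - g r / r ≤ κ r) :
    2 * deriv (deriv f) r - (r / 2) * deriv f r * κ r ≤ -(b / 2 * (α / L0 + 1)) * f r := by
  rw [hfg.deriv.deriv_eq, hfg.deriv_eq, hfg.eq_of_nhds]
  have hg'κ := mul_le_mul_of_nonneg_left (mul_sub_le_mul_of_sub_div_le hr hκ) (hb.trans hbg')
  have hgr : g r / L0 ≤ r := by rwa [div_le_iff₀' hL0]
  have hmain : b * (α / L0 + 1) * g r ≤ deriv g r * (α * r + g r) :=
    calc b * (α / L0 + 1) * g r = b * (α * (g r / L0) + g r) := by ring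
      _ ≤ deriv g r * (α * r + g r) := by gcongr; exact hb.trans hbg'
  linarith

lemma linear_extension_diff_ineq_of_gt {f κ : ℝ → ℝ} {α L0 M R a b r : ℝ} (hα : 0 < α)
    (hL0 : 0 < L0) (hM : 0 < M) (hR : R = M * (1 / L0 + 2 / α)) (hRr : R < r)
    (hf : f =ᶠ[𝓝 r] fun x => a + b * (x - R)) (ha : a ≤ M) (hb : 0 ≤ b) (hbR : b * R ≤ M)
    (hκ : α * r - M ≤ r * κ r) :
    2 * deriv (deriv f) r - (r / 2) * deriv f r * κ r ≤ -(b / 2 * (α / L0 + 1)) * f r := by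
  have haffine : deriv (fun x => a + b * (x - R)) = fun _ => b := funext fun x => by simp
  rw [hf.deriv.deriv_eq, hf.deriv_eq, hf.eq_of_nhds, haffine, deriv_const]
  have hbα : b * (α / L0 + 1) ≤ α := by
    have h1 : b * (1 / L0 + 2 / α) ≤ 1 :=
      le_of_mul_le_mul_left (by rw [hR] at hbR; linarith) hM
    calc b * (α / L0 + 1) ≤ b * (α / L0 + 1) + b := le_add_of_nonneg_right hb
      _ = α * (b * (1 / L0 + 2 / α)) := by field_simp; ring
      _ ≤ α := mul_le_of_le_one_right hα.le h1
  have hkey : (α / L0 + 1) * (a + b * (r - R)) ≤ α * r - M :=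
    calc (α / L0 + 1) * (a + b * (r - R))
        = (α / L0 + 1) * a + b * (α / L0 + 1) * (r - R) := by ring
      _ ≤ (α / L0 + 1) * M + α * (r - R) := by gcongr
      _ = α * r - M := by rw [hR]; field_simp; ring
  have := mul_le_mul_of_nonneg_left (hkey.trans hκ) hb
  linarith

/-- The key differential inequality for the linear extension `f` of `g̃ ∈ 𝒢̃`:
if `κ_U(r) ≥ α − g̃(r)/r` for all `r > 0`, then for all
`r ∈ (0, R) ∪ (R, ∞)`, `2f''(r) − (r/2) f'(r) κ_U(r) ≤ −λ f(r)`
with `λ = (g̃'(R)/2)(α/g̃'(0) + 1)` and `R = ‖g̃‖_∞(1/g̃'(0) + 2/α)`. -/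
theorem linear_extension_diff_ineq
    (g : ℝ → ℝ) (M L0 α : ℝ) (hα : 0 < α)
    (hgC2 : ContDiffOn ℝ 2 g (Ioi 0))
    (hg_nonneg : ∀ r : ℝ, 0 < r → 0 ≤ g r)
    (hg0 : Tendsto g (nhdsWithin 0 (Ioi 0)) (nhds 0))
    (hg' : ∀ r : ℝ, 0 < r → 0 ≤ deriv g r)
    (hg'' : ∀ r : ℝ, 0 < r → 2 * deriv (deriv g) r + g r * deriv g r ≤ 0)
    (hM : IsLUB (g '' Ioi 0) M)
    (hL0 : Tendsto (deriv g) (nhdsWithin 0 (Ioi 0)) (nhds L0)) (hL0pos : 0 < L0)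
    (R : ℝ) (hR : R = M * (1 / L0 + 2 / α))
    (f : ℝ → ℝ)
    (hf : ∀ r : ℝ, f r = if r ≤ R then g r else g R + deriv g R * (r - R))
    (κ : ℝ → ℝ) (hκ : ∀ r : ℝ, 0 < r → α - g r / r ≤ κ r)
    (lam : ℝ) (hlam : lam = (deriv g R / 2) * (α / L0 + 1)) :
    ∀ r : ℝ, 0 < r → r ≠ R →
      2 * deriv (deriv f) r - (r / 2) * deriv f r * κ r ≤ -lam * f r := by
  have hgd : DifferentiableOn ℝ g (Ioi 0) := hgC2.differentiableOn (by norm_num)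
  have hanti := antitoneOn_deriv_of_two_deriv_deriv_add_mul_nonpos hgC2 hg_nonneg hg' hg''
  have hgc (x : ℝ) : ContinuousOn g (Ioc 0 x) := hgd.continuousOn.mono Ioc_subset_Ioi_self
  have hgd' (x : ℝ) : DifferentiableOn ℝ g (Ioo 0 x) := hgd.mono Ioo_subset_Ioi_self
  have hgM (x : ℝ) (hx : 0 < x) : g x ≤ M := hM.1 ⟨x, hx, rfl⟩
  obtain ⟨x, hx, hgx⟩ := exists_pos_of_tendsto_deriv_pos hgd hanti hg0 hL0 hL0pos
  have hMpos : 0 < M := hgx.trans_le (hgM x hx)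
  have hRpos : 0 < R := hR ▸ by positivity
  have hbR : deriv g R * R ≤ g R := mul_le_of_le_deriv_of_tendsto_nhdsGT_zero_s12 hRpos hg0 (hgc R)
    (hgd' R) fun s hs => hanti hs.1 hRpos hs.2.le
  subst hlam
  intro r hr hrR
  rcases hrR.lt_or_gt with hlt | hgt
  · refine linear_extension_diff_ineq_of_lt hα.le hL0pos hr ?_ (hg'' r hr) (hg_nonneg r hr) ?_
      (hg' R hRpos) (hanti hr hRpos hlt.le) (hκ r hr)
    · filter_upwards [Iio_mem_nhds hlt] with x hx
      rw [hf x, if_pos hx.le]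
    · exact le_mul_of_deriv_le_of_tendsto_nhdsGT_zero_s12 hr hg0 (hgc r) (hgd' r)
        fun s hs => hanti.le_of_tendsto_nhdsGT_s12 hL0 hs.1
  · refine linear_extension_diff_ineq_of_gt hα hL0pos hMpos hR hgt ?_ (hgM R hRpos) (hg' R hRpos)
      (hbR.trans (hgM R hRpos))
      ((sub_le_sub_left (hgM r hr) _).trans (mul_sub_le_mul_of_sub_div_le hr (hκ r hr)))
    filter_upwards [Ioi_mem_nhds hgt] with x hx
    rw [hf x, if_neg hx.not_ge]
end

section
/- Let V(y) = 1 + |y|², ε > 0, R₂ > 0, and let f : [0,∞) → [0,∞) be non-decreasing, concave, subadditive, with f(0) = 0 and f constant equal to f(R₂) on [R₂, ∞). Then for all y, z, p ∈ ℝᵈ: f(|y − z|)(1 + εV(y) + εV(z)) ≤ C_Δ [ f(|y − p|)(1 + εV(y) + εV(p)) + f(|p − z|)(1 + εV(p) + εV(z)) ], where C_Δ = max{3, 2 + 2R₂²}. -/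
/-!
If `V a ≤ M V b` whenever `dist a b ≤ R`, the weight `1 + εV(y) + εV(z)` of the pair `(y, z)` is at
most `M` times the weight of `(y, p)` when `p` is `R`-close to `z`, and at most `M` times that of
`(p, z)` when `p` is `R`-close to `y`. Since `f` is capped at `f R` from `R` on, a leg `(y, p)` of
length at least `R` already dominates `f(|y - z|)`, so in every case the cost of `(y, z)` is
controlled by `M` times the cost of the two legs through `p`. For `V = 1 + |·|²` one can take
`M = max 2 (1 + 2R²)`.
-/

open Set

lemma one_add_norm_sq_le_of_norm_sub_le {E : Type*} [SeminormedAddCommGroup E] {a b : E} {R : ℝ}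
    (h : ‖a - b‖ ≤ R) : 1 + ‖a‖ ^ 2 ≤ max 2 (1 + 2 * R ^ 2) * (1 + ‖b‖ ^ 2) := by
  have hab : ‖a‖ ≤ ‖b‖ + R := (norm_le_norm_add_norm_sub' a b).trans (by linarith)
  have hsq : ‖a‖ ^ 2 ≤ (‖b‖ + R) ^ 2 := pow_le_pow_left₀ (norm_nonneg a) hab 2
  have h2 : (2 : ℝ) ≤ max 2 (1 + 2 * R ^ 2) := le_max_left _ _
  have hR : 1 + 2 * R ^ 2 ≤ max 2 (1 + 2 * R ^ 2) := le_max_right _ _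
  nlinarith [sq_nonneg (‖b‖ - R), sq_nonneg ‖b‖]

lemma one_add_mul_add_mul_le_mul {ε M u v w : ℝ} (hε : 0 ≤ ε) (hM : 1 ≤ M) (hu : 0 ≤ u)
    (hvw : v ≤ M * w) : 1 + ε * u + ε * v ≤ M * (1 + ε * u + ε * w) := by
  nlinarith [mul_nonneg (sub_nonneg.2 hM) (mul_nonneg hε hu), mul_le_mul_of_nonneg_left hvw hε]

section CappedCost

variable {f : ℝ → ℝ} {R : ℝ}

lemma apply_le_apply_of_eq_on_Ici (hf_mono : MonotoneOn f (Ici 0))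
    (hf_const : ∀ r, R ≤ r → f r = f R) {r : ℝ} (hr : 0 ≤ r) : f r ≤ f R := by
  rcases le_total R r with hRr | hrR
  · exact (hf_const r hRr).le
  · exact hf_mono hr (hr.trans hrR) hrR

variable {X : Type*} [PseudoMetricSpace X]

lemma apply_dist_le_add (hf_mono : MonotoneOn f (Ici 0))
    (hf_subadd : ∀ r s : ℝ, 0 ≤ r → 0 ≤ s → f (r + s) ≤ f r + f s) (x y z : X) :
    f (dist x z) ≤ f (dist x y) + f (dist y z) :=
  (hf_mono dist_nonneg (add_nonneg dist_nonneg dist_nonneg) (dist_triangle x y z)).trans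
    (hf_subadd _ _ dist_nonneg dist_nonneg)

lemma apply_dist_le_of_le_dist (hf_mono : MonotoneOn f (Ici 0))
    (hf_const : ∀ r, R ≤ r → f r = f R) {x y x' y' : X} (h : R ≤ dist x' y') :
    f (dist x y) ≤ f (dist x' y') :=
  (hf_const _ h).symm ▸ apply_le_apply_of_eq_on_Ici hf_mono hf_const dist_nonneg

lemma weak_triangle_of_le_mul_of_dist_le {g : X → ℝ} {ε M : ℝ} (hε : 0 ≤ ε) (hM : 1 ≤ M)
    (hg_nonneg : ∀ a, 0 ≤ g a) (hg : ∀ a b, dist a b ≤ R → g a ≤ M * g b)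
    (hf_nonneg : ∀ r : ℝ, 0 ≤ r → 0 ≤ f r) (hf_mono : MonotoneOn f (Ici 0))
    (hf_subadd : ∀ r s : ℝ, 0 ≤ r → 0 ≤ s → f (r + s) ≤ f r + f s)
    (hf_const : ∀ r, R ≤ r → f r = f R) (y z p : X) :
    f (dist y z) * (1 + ε * g y + ε * g z) ≤
      M * (f (dist y p) * (1 + ε * g y + ε * g p) + f (dist p z) * (1 + ε * g p + ε * g z)) := by
  set c := f (dist y z)
  set a := f (dist y p)
  set b := f (dist p z)
  have ha : 0 ≤ a := hf_nonneg _ dist_nonneg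
  have hb : 0 ≤ b := hf_nonneg _ dist_nonneg
  have hc : 0 ≤ c := hf_nonneg _ dist_nonneg
  have hwyp : 0 ≤ 1 + ε * g y + ε * g p := by have := hg_nonneg y; have := hg_nonneg p; positivity
  have hwpz : 0 ≤ 1 + ε * g p + ε * g z := by have := hg_nonneg p; have := hg_nonneg z; positivity
  have hwyz : 0 ≤ 1 + ε * g y + ε * g z := by have := hg_nonneg y; have := hg_nonneg z; positivity
  rcases le_total (dist y p) R with hyp | hyp <;> rcases le_total (dist p z) R with hpz | hpz
  · have h₁ : 1 + ε * g y + ε * g z ≤ M * (1 + ε * g y + ε * g p) :=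
      one_add_mul_add_mul_le_mul hε hM (hg_nonneg y) (hg z p (dist_comm z p ▸ hpz))
    have h₂ : 1 + ε * g y + ε * g z ≤ M * (1 + ε * g p + ε * g z) := by
      linarith [one_add_mul_add_mul_le_mul hε hM (hg_nonneg z) (hg y p hyp)]
    calc c * (1 + ε * g y + ε * g z)
        ≤ a * (1 + ε * g y + ε * g z) + b * (1 + ε * g y + ε * g z) := by
          rw [← add_mul]
          exact mul_le_mul_of_nonneg_right (apply_dist_le_add hf_mono hf_subadd y p z) hwyz
      _ ≤ a * (M * (1 + ε * g y + ε * g p)) + b * (M * (1 + ε * g p + ε * g z)) := by gcongr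
      _ = _ := by ring
  · have hcb : c ≤ b := apply_dist_le_of_le_dist hf_mono hf_const hpz
    have hw : 1 + ε * g y + ε * g z ≤ M * (1 + ε * g p + ε * g z) := by
      linarith [one_add_mul_add_mul_le_mul hε hM (hg_nonneg z) (hg y p hyp)]
    nlinarith [mul_le_mul hcb hw hwyz hb, mul_nonneg ha hwyp]
  · have hca : c ≤ a := apply_dist_le_of_le_dist hf_mono hf_const hyp
    have hw : 1 + ε * g y + ε * g z ≤ M * (1 + ε * g y + ε * g p) :=
      one_add_mul_add_mul_le_mul hε hM (hg_nonneg y) (hg z p (dist_comm z p ▸ hpz))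
    nlinarith [mul_le_mul hca hw hwyz ha, mul_nonneg hb hwpz]
  · have hca : c ≤ a := apply_dist_le_of_le_dist hf_mono hf_const hyp
    have hcb : c ≤ b := apply_dist_le_of_le_dist hf_mono hf_const hpz
    have hgp : 0 ≤ ε * g p := mul_nonneg hε (hg_nonneg p)
    calc c * (1 + ε * g y + ε * g z)
        ≤ c * (1 + ε * g y + ε * g p) + c * (1 + ε * g p + ε * g z) := by nlinarith
      _ ≤ a * (1 + ε * g y + ε * g p) + b * (1 + ε * g p + ε * g z) := by gcongr
      _ ≤ _ := le_mul_of_one_le_left (by positivity) hM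

end CappedCost

theorem weak_triangle_pointwise_general {d : ℕ}
    (V : EuclideanSpace ℝ (Fin d) → ℝ) (hV : ∀ y, V y = 1 + ‖y‖ ^ 2)
    (ε R₂ : ℝ) (hε : 0 < ε)
    (f : ℝ → ℝ)
    (hf_nonneg : ∀ r : ℝ, 0 ≤ r → 0 ≤ f r)
    (hf_mono : MonotoneOn f (Ici 0))
    (hf_subadd : ∀ r s : ℝ, 0 ≤ r → 0 ≤ s → f (r + s) ≤ f r + f s)
    (hf_const : ∀ r : ℝ, R₂ ≤ r → f r = f R₂) :
    ∀ y z p : EuclideanSpace ℝ (Fin d),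
      f ‖y - z‖ * (1 + ε * V y + ε * V z) ≤
        max 3 (2 + 2 * R₂ ^ 2) *
          (f ‖y - p‖ * (1 + ε * V y + ε * V p)
            + f ‖p - z‖ * (1 + ε * V p + ε * V z)) := by
  intro y z p
  set M := max 2 (1 + 2 * R₂ ^ 2)
  have hM : 1 ≤ M := le_max_of_le_left one_le_two
  have hMC : M ≤ max 3 (2 + 2 * R₂ ^ 2) := max_le_max (by norm_num) (by linarith)
  have hV_nonneg : ∀ a, 0 ≤ V a := fun a => hV a ▸ by positivity
  have hV_comp : ∀ a b, dist a b ≤ R₂ → V a ≤ M * V b := fun a b h => by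
    rw [hV, hV]; exact one_add_norm_sq_le_of_norm_sub_le (dist_eq_norm a b ▸ h)
  have key := weak_triangle_of_le_mul_of_dist_le hε.le hM hV_nonneg hV_comp
    hf_nonneg hf_mono hf_subadd hf_const y z p
  simp only [dist_eq_norm] at key
  refine key.trans (mul_le_mul_of_nonneg_right hMC ?_)
  have := hV_nonneg y; have := hV_nonneg z; have := hV_nonneg p
  have := hf_nonneg ‖y - p‖ (norm_nonneg _); have := hf_nonneg ‖p - z‖ (norm_nonneg _)
  positivity

/-- Pointwise weak-triangle inequality for the distorted cost
`f(|y−z|)(1 + εV(y) + εV(z))` with `V(y) = 1 + |y|²`: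
for all `y, z, p`, with `C_Δ = max{3, 2 + 2R₂²}`,
`f(|y−z|)(1+εV(y)+εV(z)) ≤ C_Δ [f(|y−p|)(1+εV(y)+εV(p)) + f(|p−z|)(1+εV(p)+εV(z))]`. -/
theorem weak_triangle_pointwise {d : ℕ}
    (V : EuclideanSpace ℝ (Fin d) → ℝ) (hV : ∀ y, V y = 1 + ‖y‖ ^ 2)
    (ε R₂ : ℝ) (hε : 0 < ε) (hR₂ : 0 < R₂)
    (f : ℝ → ℝ)
    (hf_nonneg : ∀ r : ℝ, 0 ≤ r → 0 ≤ f r)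
    (hf_mono : MonotoneOn f (Ici 0))
    (hf_conc : ConcaveOn ℝ (Ici 0) f)
    (hf_subadd : ∀ r s : ℝ, 0 ≤ r → 0 ≤ s → f (r + s) ≤ f r + f s)
    (hf0 : f 0 = 0)
    (hf_const : ∀ r : ℝ, R₂ ≤ r → f r = f R₂) :
    ∀ y z p : EuclideanSpace ℝ (Fin d),
      f ‖y - z‖ * (1 + ε * V y + ε * V z) ≤
        max 3 (2 + 2 * R₂ ^ 2) *
          (f ‖y - p‖ * (1 + ε * V y + ε * V p)
            + f ‖p - z‖ * (1 + ε * V p + ε * V z)) :=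
  weak_triangle_pointwise_general V hV ε R₂ hε f hf_nonneg hf_mono hf_subadd hf_const
end

section
/- Let α_μ, α_ν, β_μ, β_ν ∈ (0, ∞) with T > 0, and define γ_∞^μ = 2(α_μ + √(α_μ² + 4α_μ/(T²β_ν)))^{-1} and γ_∞^ν = 2(α_ν + √(α_ν² + 4α_ν/(T²β_μ)))^{-1}. If T > (β_μβ_ν − α_μα_ν)/√(α_μβ_μα_νβ_ν(α_μ+β_μ)(α_ν+β_ν)), then T² > γ_∞^μ γ_∞^ν. -/
/-!
For `θ > 0`, `θ γ_∞^μ < T` as soon as `θ/α_μ − 1/(θβ_ν) < T`, because `γ_∞^μ` is the positive root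
of `α_μ γ² + α_μ T² β_ν γ = T² β_ν` and this quadratic is increasing on `(0, ∞)`. Likewise
`θ⁻¹ γ_∞^ν < T` as soon as `θ⁻¹/α_ν − θ/β_μ < T`. For the balancing choice
`θ = √(α_μβ_μ(α_ν+β_ν)) / √(α_νβ_ν(α_μ+β_μ))` both conditions read exactly as the threshold on `T`,
and multiplying the two inequalities gives `γ_∞^μ γ_∞^ν < T²`.
-/

open Real

noncomputable def sinkhornGamma (α β T : ℝ) : ℝ :=
  2 * (α + √(α ^ 2 + 4 * α / (T ^ 2 * β)))⁻¹

section SinkhornGamma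

variable {α β T : ℝ}

theorem sinkhornGamma_pos (hα : 0 < α) : 0 < sinkhornGamma α β T := by
  unfold sinkhornGamma
  positivity

theorem sinkhornGamma_quadratic (hα : 0 < α) (hβ : 0 < β) (hT : 0 < T) :
    α * sinkhornGamma α β T ^ 2 + α * T ^ 2 * β * sinkhornGamma α β T = T ^ 2 * β := by
  set s := √(α ^ 2 + 4 * α / (T ^ 2 * β))
  have hs : s ^ 2 = α ^ 2 + 4 * α / (T ^ 2 * β) := sq_sqrt (by positivity)
  have hden : 0 < α + s := by positivity
  have hγ : sinkhornGamma α β T * (α + s) = 2 := by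
    rw [sinkhornGamma, mul_assoc, inv_mul_cancel₀ hden.ne', mul_one]
  have hs' : T ^ 2 * β * s ^ 2 = T ^ 2 * β * α ^ 2 + 4 * α := by
    rw [hs]
    field_simp
  linear_combination T ^ 2 * β * (2 - α * sinkhornGamma α β T + sinkhornGamma α β T * s) / 4 * hγ
    - sinkhornGamma α β T ^ 2 / 4 * hs'

theorem mul_sinkhornGamma_lt {θ : ℝ} (hα : 0 < α) (hβ : 0 < β) (hT : 0 < T) (hθ : 0 < θ)
    (h : θ / α - 1 / (θ * β) < T) : θ * sinkhornGamma α β T < T := by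
  set x := θ * sinkhornGamma α β T
  have hquad : α * x ^ 2 + α * T ^ 2 * β * θ * x = T ^ 2 * (β * θ ^ 2) := by
    linear_combination θ ^ 2 * sinkhornGamma_quadratic hα hβ hT
  have h' : β * θ ^ 2 < α + T * α * β * θ := by
    rw [div_sub_div _ _ hα.ne' (by positivity), div_lt_iff₀ (by positivity)] at h
    linarith
  by_contra! hx
  have : T ^ 2 * (β * θ ^ 2) < T ^ 2 * (β * θ ^ 2) :=
    calc T ^ 2 * (β * θ ^ 2) < T ^ 2 * (α + T * α * β * θ) := by gcongr
      _ = α * T ^ 2 + α * T ^ 2 * β * θ * T := by ring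
      _ ≤ α * x ^ 2 + α * T ^ 2 * β * θ * x := by gcongr
      _ = T ^ 2 * (β * θ ^ 2) := hquad
  exact lt_irrefl _ this

end SinkhornGamma

theorem div_sub_one_div_eq_of_sq_eq {a b c d A B : ℝ} (ha : 0 < a) (hd : 0 < d) (hA : 0 < A)
    (hB : 0 < B) (hA2 : A ^ 2 = a * b * (c + d)) (hB2 : B ^ 2 = c * d * (a + b)) :
    A / B / a - 1 / (A / B * d) = (b * d - a * c) / (A * B) := by
  field_simp
  linear_combination d * hA2 - a * hB2

/-- Explicit convergence threshold for Sinkhorn with strongly log-concave marginals: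
with `γ_∞^μ = 2(α_μ + √(α_μ² + 4α_μ/(T²β_ν)))⁻¹` and
`γ_∞^ν = 2(α_ν + √(α_ν² + 4α_ν/(T²β_μ)))⁻¹`, if
`T > (β_μβ_ν − α_μα_ν)/√(α_μβ_μα_νβ_ν(α_μ+β_μ)(α_ν+β_ν))` then `T² > γ_∞^μ γ_∞^ν`. -/
theorem sinkhorn_threshold (αμ αν βμ βν T : ℝ)
    (hαμ : 0 < αμ) (hαν : 0 < αν) (hβμ : 0 < βμ) (hβν : 0 < βν) (hT : 0 < T)
    (γμ γν : ℝ)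
    (hγμ : γμ = 2 * (αμ + Real.sqrt (αμ ^ 2 + 4 * αμ / (T ^ 2 * βν)))⁻¹)
    (hγν : γν = 2 * (αν + Real.sqrt (αν ^ 2 + 4 * αν / (T ^ 2 * βμ)))⁻¹)
    (hthr : (βμ * βν - αμ * αν)
        / Real.sqrt (αμ * βμ * αν * βν * (αμ + βμ) * (αν + βν)) < T) :
    γμ * γν < T ^ 2 := by
  set A := √(αμ * βμ * (αν + βν))
  set B := √(αν * βν * (αμ + βμ))
  have hA : 0 < A := sqrt_pos.mpr (by positivity)
  have hB : 0 < B := sqrt_pos.mpr (by positivity)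
  have hA2 : A ^ 2 = αμ * βμ * (αν + βν) := sq_sqrt (by positivity)
  have hB2 : B ^ 2 = αν * βν * (αμ + βμ) := sq_sqrt (by positivity)
  have hAB : √(αμ * βμ * αν * βν * (αμ + βμ) * (αν + βν)) = A * B := by
    rw [← sqrt_mul (by positivity)]
    ring_nf
  have hμ : A / B * γμ < T := by
    refine hγμ ▸ mul_sinkhornGamma_lt hαμ hβν hT (by positivity) ?_
    rwa [div_sub_one_div_eq_of_sq_eq hαμ hβν hA hB hA2 hB2, ← hAB]
  have hν : B / A * γν < T := by
    refine hγν ▸ mul_sinkhornGamma_lt hαν hβμ hT (by positivity) ?_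
    rwa [div_sub_one_div_eq_of_sq_eq hαν hβμ hB hA hB2 hA2, mul_comm B, ← hAB, mul_comm βν,
      mul_comm αν]
  have hγμ0 : 0 < γμ := hγμ ▸ sinkhornGamma_pos hαμ
  have hγν0 : 0 < γν := hγν ▸ sinkhornGamma_pos hαν
  calc γμ * γν = A / B * γμ * (B / A * γν) := by field_simp
    _ < T * T := mul_lt_mul'' hμ hν (by positivity) (by positivity)
    _ = T ^ 2 := (sq T).symm
end
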